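/- arXiv:1111.7172 — 3 statements merged into one kernel-verified Lean document; each statement's English description precedes it below -/
import Mathlib

section
/- Let d ≥ 3 and n ≥ 2 be integers, let w ∈ G(d,d,n) with w ≤_T γ, and let (t_1,…,t_k) be a reduced T-word for w. Then the reflections t_1,…,t_k are pairwise distinct. -/
open Matrix Complex

/-- The primitive `d`-th root of unity `ζ_d = exp(2πi/d)`. -/
noncomputable def zetaC (d : ℕ) : ℂ := Complex.exp (2 * (Real.pi : ℂ) * Complex.I / (d : ℂ))

/-- The ambient group of invertible `n × n` complex matrices. -/
abbrev GLn (n : ℕ) := GL (Fin n) ℂ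

/-- Membership in `G(d,d,n)`: monomial matrices whose nonzero entries are `d`-th roots of
unity with product `1`. -/
def IsGdd (d n : ℕ) (w : GLn n) : Prop :=
  ∃ (σ : Equiv.Perm (Fin n)) (z : Fin n → ℂ),
    (∀ j, z j ^ d = 1) ∧ (∏ j, z j) = 1 ∧
    ∀ k l : Fin n, (w : Matrix (Fin n) (Fin n) ℂ) k l = if k = σ l then z l else 0

/-- The fixed space `{x : ℂⁿ | w x = x}` of `w`. -/
noncomputable def fixSpace {n : ℕ} (w : GLn n) : Submodule ℂ (Fin n → ℂ) :=
  LinearMap.ker ((w : Matrix (Fin n) (Fin n) ℂ).mulVecLin - LinearMap.id)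

/-- A reflection of `G(d,d,n)`: an element of the group of finite order whose fixed space
has dimension `n - 1`. -/
def IsGddRefl (d n : ℕ) (t : GLn n) : Prop :=
  IsGdd d n t ∧ IsOfFinOrder t ∧ Module.finrank ℂ (fixSpace t) = n - 1

/-- The absolute (reflection) length `ℓ_T`. -/
noncomputable def ellT (d n : ℕ) (w : GLn n) : ℕ :=
  sInf {k | ∃ l : List (GLn n), l.length = k ∧ (∀ t ∈ l, IsGddRefl d n t) ∧ l.prod = w}

/-- The absolute order `u ≤_T v`. -/
def absLe (d n : ℕ) (u v : GLn n) : Prop :=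
  ellT d n v = ellT d n u + ellT d n (u⁻¹ * v)

/-- The matrix of the Coxeter element `γ = [1⁰ 2⁰ … (n−1)⁰][n⁰]⁻¹`:
`γ e_i = e_{i+1}` for `1 ≤ i ≤ n−2` (1-based), `γ e_{n−1} = ζ_d e_1`, `γ e_n = ζ_d⁻¹ e_n`. -/
noncomputable def gammaMat (d n : ℕ) : Matrix (Fin n) (Fin n) ℂ :=
  Matrix.of fun k l : Fin n =>
    if (l : ℕ) + 2 < n ∧ (k : ℕ) = (l : ℕ) + 1 then 1
    else if (l : ℕ) + 2 = n ∧ (k : ℕ) = 0 then zetaC d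
    else if (l : ℕ) + 1 = n ∧ k = l then (zetaC d)⁻¹
    else 0

/-- The matrix of the reflection `((i⁰ jˢ))` (1-based indices `i < j`): it sends
`e_i ↦ ζ_dˢ e_j`, `e_j ↦ ζ_d⁻ˢ e_i` and fixes the other basis vectors. -/
noncomputable def reflMat (d n : ℕ) (i j s : ℕ) : Matrix (Fin n) (Fin n) ℂ :=
  Matrix.of fun k l : Fin n =>
    if (l : ℕ) + 1 = i ∧ (k : ℕ) + 1 = j then zetaC d ^ s
    else if (l : ℕ) + 1 = j ∧ (k : ℕ) + 1 = i then (zetaC d ^ s)⁻¹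
    else if k = l ∧ (k : ℕ) + 1 ≠ i ∧ (k : ℕ) + 1 ≠ j then 1
    else 0

/-- Reduced `T`-words for `w`. -/
def IsReducedTWord (d n : ℕ) (w : GLn n) (l : List (GLn n)) : Prop :=
  (∀ t ∈ l, IsGddRefl d n t) ∧ l.prod = w ∧ l.length = ellT d n w

/-- The set `T_γ` of reflections below `γ` in absolute order. -/
def TgammaSet (d n : ℕ) (γ : GLn n) : Set (GLn n) :=
  {t : GLn n | IsGddRefl d n t ∧ absLe d n t γ}

/-- The list of (1-based) triples `(i, j, s)` indexing the reflections `((i⁰ jˢ))` of `T_γ`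
in the order `≺`: first `((i⁰ j⁰))` with `1 ≤ i < j ≤ n−1` lexicographically, then for each
`i = 1, …, n−1` the block `((i⁰ n⁰)), ((i⁰ n^{d−1})), …, ((i⁰ n¹)),
((i⁰ (i+1)^{d−1})), …, ((i⁰ (n−1)^{d−1}))`. -/
def reflTriples (d n : ℕ) : List (ℕ × ℕ × ℕ) :=
  ((List.range' 1 (n - 2)).flatMap fun i =>
    (List.range' (i + 1) (n - 1 - i)).map fun j => (i, j, 0)) ++
  ((List.range' 1 (n - 1)).flatMap fun i =>
    ((i, n, 0) :: ((List.range' 1 (d - 1)).map fun r => (i, n, d - r))) ++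
    ((List.range' (i + 1) (n - 1 - i)).map fun j => (i, j, d - 1)))

/-- `a` occurs (strictly) before `b` in the list `l`. -/
def ListBefore {α : Type*} (l : List α) (a b : α) : Prop :=
  ∃ l1 l2 l3 : List α, l = l1 ++ a :: (l2 ++ b :: l3)

/-- The total order `≺` on `T_γ`. -/
def precRel (d n : ℕ) (t t' : GLn n) : Prop :=
  ∃ p q : ℕ × ℕ × ℕ,
    (t : Matrix (Fin n) (Fin n) ℂ) = reflMat d n p.1 p.2.1 p.2.2 ∧
    (t' : Matrix (Fin n) (Fin n) ℂ) = reflMat d n q.1 q.2.1 q.2.2 ∧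
    ListBefore (reflTriples d n) p q

section ELShellability

variable {P : Type*} {Λ : Type*}

/-- `b` covers `a` with respect to the relation `le`. -/
def CovRel (le : P → P → Prop) (a b : P) : Prop :=
  le a b ∧ a ≠ b ∧ ∀ c, le a c → le c b → c = a ∨ c = b

/-- `c` is a maximal (i.e. saturated) chain of the interval `[x, y]`: a sequence of covers
starting at `x` and ending at `y`. -/
def IsMaxChainIn (le : P → P → Prop) (x y : P) (c : List P) : Prop :=
  c.Chain' (CovRel le) ∧ c.head? = some x ∧ c.getLast? = some y

/-- The label sequence of a chain `c` under the edge labeling `lab`. -/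
def labelSeq (lab : P → P → Λ) (c : List P) : List Λ :=
  (c.zip c.tail).map fun p => lab p.1 p.2

/-- `lab` is an EL-labeling with respect to the order `le` on `P` and the (strict) order
`lt` on the label poset `Λ`: every closed interval has exactly one maximal chain with
strictly increasing label sequence, and this chain is lexicographically strictly smaller
than every other maximal chain of the interval. -/
def IsELLabeling (le : P → P → Prop) (lt : Λ → Λ → Prop) (lab : P → P → Λ) : Prop :=
  ∀ x y : P, le x y →
    ∃ c : List P, IsMaxChainIn le x y c ∧ (labelSeq lab c).Chain' lt ∧
      ∀ c' : List P, IsMaxChainIn le x y c' → c' ≠ c →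
        ¬ (labelSeq lab c').Chain' lt ∧ List.Lex lt (labelSeq lab c) (labelSeq lab c')

/-- EL-shellability: existence of an EL-labeling into some strictly ordered label type. -/
def IsELShellable (le : P → P → Prop) : Prop :=
  ∃ (Λ' : Type) (lt : Λ' → Λ' → Prop), IsStrictOrder Λ' lt ∧
    ∃ lab : P → P → Λ', IsELLabeling le lt lab

end ELShellability

/-- The set of `m`-divisible noncrossing partitions `NC^{(m)}` (as `(m+1)`-tuples). -/
def NCmSet (d n m : ℕ) (γ : GLn n) : Set (Fin (m + 1) → GLn n) :=
  {w | (List.ofFn w).prod = γ ∧ (∑ i, ellT d n (w i)) = ellT d n γ}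

/-- The order on `m`-divisible noncrossing partitions:
`(u₀; u₁, …, u_m) ≤ (v₀; v₁, …, v_m)` iff `v_i ≤_T u_i` for all `1 ≤ i ≤ m`. -/
def NCmLe (d n : ℕ) {m : ℕ} (u v : Fin (m + 1) → GLn n) : Prop :=
  ∀ i : Fin (m + 1), i ≠ 0 → absLe d n (v i) (u i)

section Shifts

variable {G : Type*} [Monoid G]

/-- The left-shift of a word at (1-based) position `i`:
`(t₁, …, t_{i−2}, t_i, t_i t_{i−1} t_i, t_{i+1}, …, t_k)`. -/
def leftShiftAt (l : List G) (i : ℕ) : List G :=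
  l.take (i - 2) ++ [l.getD (i - 1) 1, l.getD (i - 1) 1 * l.getD (i - 2) 1 * l.getD (i - 1) 1]
    ++ l.drop i

/-- The right-shift of a word at (1-based) position `i`:
`(t₁, …, t_{i−1}, t_i t_{i+1} t_i, t_i, t_{i+2}, …, t_k)`. -/
def rightShiftAt (l : List G) (i : ℕ) : List G :=
  l.take (i - 1) ++ [l.getD (i - 1) 1 * l.getD i 1 * l.getD (i - 1) 1, l.getD (i - 1) 1]
    ++ l.drop (i + 1)

/-- One left-shift step between words. -/
def LeftShiftStep (l l' : List G) : Prop :=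
  ∃ i, 2 ≤ i ∧ i ≤ l.length ∧ l' = leftShiftAt l i

/-- The word `l` has a descent at (1-based) position `p` with respect to the strict
relation `lt`, i.e. `t_p ≻ t_{p+1}`. -/
def HasDescentAt (lt : G → G → Prop) (l : List G) (p : ℕ) : Prop :=
  lt (l.getD p 1) (l.getD (p - 1) 1)

end Shifts

/-- A `γ`-compatible reflection ordering (Definition 4.2 of the paper): for all
non-commuting reflections `t₁, t₂ ≤_T γ` and every rank-2 element `x ≤_T γ` above both,
there is exactly one ordered pair `(a, b)` of reflections below `x` with `ab = x` and
`a ≺ b`. -/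
def IsCompatibleOrdering (d n : ℕ) (γ : GLn n) (lt : GLn n → GLn n → Prop) : Prop :=
  ∀ t1 t2 : GLn n, IsGddRefl d n t1 → IsGddRefl d n t2 →
    absLe d n t1 γ → absLe d n t2 γ → t1 * t2 ≠ t2 * t1 →
    ∀ x : GLn n, ellT d n x = 2 → absLe d n x γ → absLe d n t1 x → absLe d n t2 x →
      ∃! p : GLn n × GLn n, IsGddRefl d n p.1 ∧ IsGddRefl d n p.2 ∧
        absLe d n p.1 x ∧ absLe d n p.2 x ∧ p.1 * p.2 = x ∧ lt p.1 p.2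

/-! Reflections of `G(d,d,n)` are involutions: a matrix `M` with `rank (M - 1) ≤ 1` is
`1 + u vᵀ`, with `det M = 1 + v ⬝ᵥ u`. As `det M = ±1`, either `v ⬝ᵥ u = 0`, so `M` is unipotent
and, having finite order, equals `1`; or `v ⬝ᵥ u = -2`, so `M² = 1`.
The reflections are moreover closed under conjugation, so a repeated letter `t ⋯ t` in a
`T`-word can be cancelled: `t x t` is the product of the conjugates `t r t` of the letters `r`
of `x`, which yields a `T`-word for the same element that is two letters shorter. -/

theorem List.exists_eq_append_cons_append_cons_of_not_nodup {α : Type*} {l : List α}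
    (h : ¬ l.Nodup) : ∃ (a : α) (l₁ l₂ l₃ : List α), l = l₁ ++ a :: (l₂ ++ a :: l₃) := by
  obtain ⟨a, ha⟩ : ∃ a, [a, a].Sublist l := by simpa [List.nodup_iff_sublist] using h
  obtain ⟨r₁, r₂, rfl, ha₁, ha₂⟩ := List.cons_sublist_iff.mp ha
  obtain ⟨s, t, rfl⟩ := List.append_of_mem ha₁
  obtain ⟨p, q, rfl⟩ := List.append_of_mem (List.singleton_sublist.mp ha₂)
  exact ⟨a, s, t ++ p, q, by simp⟩

theorem List.exists_shorter_prod_eq_of_not_nodup {G : Type*} [Group G] {S : Set G}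
    (hS_sq : ∀ t ∈ S, t * t = 1) (hS_conj : ∀ t ∈ S, ∀ r ∈ S, t * r * t ∈ S)
    {l : List G} (hl : ∀ t ∈ l, t ∈ S) (hnd : ¬ l.Nodup) :
    ∃ l' : List G, (∀ t ∈ l', t ∈ S) ∧ l'.prod = l.prod ∧ l'.length + 2 = l.length := by
  obtain ⟨t, l₁, l₂, l₃, rfl⟩ := List.exists_eq_append_cons_append_cons_of_not_nodup hnd
  have ht : t ∈ S := hl t (by simp)
  have hconj : ∀ r, t * r * t = MulAut.conj t r := by
    simp [inv_eq_of_mul_eq_one_right (hS_sq t ht)]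
  refine ⟨l₁ ++ l₂.map (MulAut.conj t) ++ l₃, ?_, ?_, by simp; omega⟩
  · simp only [List.mem_append, List.mem_map]
    rintro r ((hr | ⟨r, hr, rfl⟩) | hr)
    · exact hl r (by simp [hr])
    · exact hconj r ▸ hS_conj t ht r (hl r (by simp [hr]))
    · exact hl r (by simp [hr])
  · simp [← map_list_prod, ← hconj, mul_assoc]

theorem one_add_pow_of_mul_self_eq_zero {R : Type*} [Ring R] {a : R} (ha : a * a = 0) (m : ℕ) :
    (1 + a) ^ m = 1 + m • a := by
  induction m with
  | zero => simp
  | succ m ih =>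
    rw [pow_succ, ih, add_mul, one_mul, smul_mul_assoc, mul_add, mul_one, ha, add_zero, succ_nsmul]
    abel

namespace Matrix

variable {ι m n K : Type*} [Fintype ι] [DecidableEq ι] [Fintype n] [DecidableEq n] [Field K]

theorem exists_eq_vecMulVec_of_rank_le_one {A : Matrix m n K} (hA : A.rank ≤ 1) :
    ∃ (u : m → K) (v : n → K), A = vecMulVec u v := by
  obtain ⟨u, hu⟩ := finrank_le_one_iff.mp hA
  choose v hv using fun j => hu ⟨A.mulVecLin (Pi.single j 1), LinearMap.mem_range_self _ _⟩
  refine ⟨u, v, ?_⟩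
  ext i j
  have := congrFun (congrArg Subtype.val (hv j)) i
  simp only [SetLike.val_smul, Pi.smul_apply, smul_eq_mul, mulVecBilin_apply, mulVec_single,
    MulOpposite.op_one, col_apply, one_smul] at this
  rw [vecMulVec_apply, ← this, mul_comm]

theorem mul_self_eq_one_of_rank_sub_one_le_one [CharZero K] {M : Matrix ι ι K}
    (hM : IsOfFinOrder M) (hdet : M.det = 1 ∨ M.det = -1) (hrank : (M - 1).rank ≤ 1) :
    M * M = 1 := by
  obtain ⟨u, v, huv⟩ := exists_eq_vecMulVec_of_rank_le_one hrank
  set c := v ⬝ᵥ u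
  have hM1 : M = 1 + vecMulVec u v := by rw [← huv]; abel
  have hsq : vecMulVec u v * vecMulVec u v = c • vecMulVec u v := by
    rw [vecMulVec_mul_vecMulVec, vecMulVec_smul]
  have hdet' : M.det = 1 + c := by
    rw [hM1, vecMulVec_eq Unit, det_one_add_replicateCol_mul_replicateRow]
  by_cases hc : c = 0
  · obtain ⟨k, hk, hpow⟩ := hM.exists_pow_eq_one
    rw [hM1, one_add_pow_of_mul_self_eq_zero (by rw [hsq, hc, zero_smul])] at hpow
    rw [add_eq_left, ← Nat.cast_smul_eq_nsmul K, smul_eq_zero, Nat.cast_eq_zero] at hpow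
    simp [hM1, hpow.resolve_left hk.ne']
  · have hc2 : c = -2 := by
      rcases hdet with h | h <;> rw [hdet'] at h
      · exact absurd (by linear_combination h) hc
      · linear_combination h
    simp only [hM1, add_mul, mul_add, one_mul, mul_one, hsq, hc2]
    module

end Matrix

theorem IsGdd.mul {d n : ℕ} {a b : GLn n} (ha : IsGdd d n a) (hb : IsGdd d n b) :
    IsGdd d n (a * b) := by
  obtain ⟨σ, z, hz, hzp, hσ⟩ := ha
  obtain ⟨τ, y, hy, hyp, hτ⟩ := hb
  refine ⟨τ.trans σ, fun l => z (τ l) * y l, fun j => by rw [mul_pow, hz, hy, one_mul], ?_, ?_⟩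
  · rw [Finset.prod_mul_distrib, Equiv.prod_comp τ z, hzp, hyp, one_mul]
  · intro k l
    rw [Units.val_mul, Matrix.mul_apply, Finset.sum_eq_single (τ l)]
    · simp only [hσ, hτ, Equiv.trans_apply]
      split_ifs <;> simp_all
    · intro m _ hm
      simp [hτ, hm]
    · simp

theorem IsGdd.det_eq_one_or_neg_one {d n : ℕ} {w : GLn n} (h : IsGdd d n w) :
    (w : Matrix (Fin n) (Fin n) ℂ).det = 1 ∨ (w : Matrix (Fin n) (Fin n) ℂ).det = -1 := by
  obtain ⟨σ, z, -, hzp, hσ⟩ := h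
  have hw : (w : Matrix (Fin n) (Fin n) ℂ) = σ⁻¹.permMatrix ℂ * Matrix.diagonal z := by
    ext k l
    rw [hσ, Matrix.mul_diagonal, Equiv.Perm.permMatrix, PEquiv.toMatrix_apply]
    simp [Equiv.eq_symm_apply, eq_comm]
  rw [hw, Matrix.det_mul, Matrix.det_permutation, Matrix.det_diagonal, hzp, mul_one]
  rcases Int.units_eq_one_or (Equiv.Perm.sign σ⁻¹) with h | h <;> simp [h]

theorem fixSpace_eq_ker {n : ℕ} (w : GLn n) :
    fixSpace w = LinearMap.ker ((w : Matrix (Fin n) (Fin n) ℂ) - 1).mulVecLin := by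
  ext x
  simp [fixSpace]

theorem finrank_fixSpace_add_rank {n : ℕ} (w : GLn n) :
    Module.finrank ℂ (fixSpace w) + ((w : Matrix (Fin n) (Fin n) ℂ) - 1).rank = n := by
  rw [fixSpace_eq_ker, Matrix.rank, add_comm, LinearMap.finrank_range_add_finrank_ker,
    Module.finrank_fin_fun]

theorem IsConj.finrank_fixSpace_eq {n : ℕ} {r s : GLn n} (h : IsConj r s) :
    Module.finrank ℂ (fixSpace r) = Module.finrank ℂ (fixSpace s) := by
  obtain ⟨g, rfl⟩ := isConj_iff.mp h
  have hrank : ((g * r * g⁻¹ : GLn n) - 1 : Matrix (Fin n) (Fin n) ℂ).rank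
      = ((r : Matrix (Fin n) (Fin n) ℂ) - 1).rank := by
    have hconj_sub : ((g * r * g⁻¹ : GLn n) - 1 : Matrix (Fin n) (Fin n) ℂ)
        = g * ((r : Matrix (Fin n) (Fin n) ℂ) - 1) * (g⁻¹ : GLn n) := by
      simp only [Units.val_mul, mul_sub, sub_mul, mul_one, Units.mul_inv]
    rw [hconj_sub, Matrix.rank_mul_eq_left_of_isUnit_det _ _ (Matrix.isUnits_det_units _),
      Matrix.rank_mul_eq_right_of_isUnit_det _ _ (Matrix.isUnits_det_units _)]
  have h₁ := finrank_fixSpace_add_rank r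
  have h₂ := finrank_fixSpace_add_rank (g * r * g⁻¹)
  omega

theorem IsGddRefl.mul_self {d n : ℕ} {t : GLn n} (ht : IsGddRefl d n t) : t * t = 1 := by
  obtain ⟨hgdd, hfin, hfix⟩ := ht
  have hrank := finrank_fixSpace_add_rank t
  exact Units.ext (Matrix.mul_self_eq_one_of_rank_sub_one_le_one
    (Units.isOfFinOrder_val.mpr hfin) hgdd.det_eq_one_or_neg_one (by omega))

theorem IsGddRefl.conj {d n : ℕ} {t r : GLn n} (ht : IsGddRefl d n t) (hr : IsGddRefl d n r) :
    IsGddRefl d n (t * r * t) := by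
  have hconj : IsConj r (t * r * t) :=
    isConj_iff.mpr ⟨t, by rw [inv_eq_of_mul_eq_one_right ht.mul_self]⟩
  exact ⟨(ht.1.mul hr.1).mul ht.1, hconj.isOfFinOrder hr.2.1,
    hconj.finrank_fixSpace_eq ▸ hr.2.2⟩

theorem ellT_prod_le_length {d n : ℕ} {l : List (GLn n)} (hl : ∀ t ∈ l, IsGddRefl d n t) :
    ellT d n l.prod ≤ l.length :=
  Nat.sInf_le ⟨l, rfl, hl, rfl⟩

theorem reduced_word_nodup_general
    (d n : ℕ)
    (w : GLn n)
    (l : List (GLn n)) (hl : IsReducedTWord d n w l) :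
    l.Nodup := by
  obtain ⟨hrefl, rfl, hlen⟩ := hl
  by_contra hnd
  obtain ⟨l', hrefl', hprod, hlen'⟩ := List.exists_shorter_prod_eq_of_not_nodup
    (S := {t | IsGddRefl d n t}) (fun _ ht => ht.mul_self) (fun _ ht _ hr => ht.conj hr)
    hrefl hnd
  have hle : ellT d n l.prod ≤ l'.length := hprod ▸ ellT_prod_le_length hrefl'
  omega

/-- For `w ≤_T γ`, the letters of any reduced `T`-word for `w` are
pairwise distinct. -/
theorem reduced_word_nodup
    (d n : ℕ) (hd : 3 ≤ d) (hn : 2 ≤ n)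
    (γ w : GLn n) (hγ : (γ : Matrix (Fin n) (Fin n) ℂ) = gammaMat d n)
    (hw : absLe d n w γ)
    (l : List (GLn n)) (hl : IsReducedTWord d n w l) :
    l.Nodup :=
  reduced_word_nodup_general d n w l hl
end

section
/- Let d ≥ 3 and n ≥ 2 be integers, let w ∈ G(d,d,n) with w ≤_T γ, and let ≺ be a total order on T_γ that is a γ-compatible reflection ordering. Then the restriction of ≺ to T_w = {t ∈ T : t ≤_T w} is a w-compatible reflection ordering: for all t_1, t_2 ∈ T_w with t_1t_2 ≠ t_2t_1 and every x ∈ G(d,d,n) with ℓ_T(x) = 2, x ≤_T w, t_1 ≤_T x and t_2 ≤_T x, there is exactly one ordered pair (a,b) of reflections with a ≤_T x, b ≤_T x, ab = x and a ≺ b. -/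
open Matrix Complex

/-
Absolute length is subadditive on products of reflections, so the absolute
order is transitive there; `ellT` takes the junk value `0` on the elements that are not such
products, which is why transitivity is stated on the subgroup generated by the reflections.
Then `T_w ⊆ T_γ` and `[1, w] ⊆ [1, γ]`, and the compatibility condition for `w` is an
instance of the one for `γ`.
-/

section ReflectionLength

variable {d n : ℕ}

def reflSubgroup (d n : ℕ) : Subgroup (GLn n) :=
  Subgroup.closure {t | IsGddRefl d n t}

lemma IsGddRefl.mem_reflSubgroup {t : GLn n} (ht : IsGddRefl d n t) : t ∈ reflSubgroup d n :=
  Subgroup.subset_closure ht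

lemma mem_reflSubgroup_iff {a : GLn n} :
    a ∈ reflSubgroup d n ↔ ∃ l : List (GLn n), (∀ t ∈ l, IsGddRefl d n t) ∧ l.prod = a := by
  rw [reflSubgroup, ← Subgroup.mem_toSubmonoid,
    Subgroup.closure_toSubmonoid_of_isOfFinOrder fun t ht => ht.2.1]
  refine ⟨Submonoid.exists_list_of_mem_closure, ?_⟩
  rintro ⟨l, hl, rfl⟩
  exact Submonoid.list_prod_mem _ fun t ht => Submonoid.subset_closure (hl t ht)

lemma exists_reducedTWord {a : GLn n} (ha : a ∈ reflSubgroup d n) :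
    ∃ l, IsReducedTWord d n a l := by
  obtain ⟨l, hl, hprod⟩ := mem_reflSubgroup_iff.mp ha
  obtain ⟨l', hlen, hl', hprod'⟩ := Nat.sInf_mem (s := {k | ∃ l : List (GLn n),
    l.length = k ∧ (∀ t ∈ l, IsGddRefl d n t) ∧ l.prod = a}) ⟨l.length, l, rfl, hl, hprod⟩
  exact ⟨l', hl', hprod', hlen⟩

lemma ellT_le_length {a : GLn n} {l : List (GLn n)} (hl : ∀ t ∈ l, IsGddRefl d n t)
    (hprod : l.prod = a) : ellT d n a ≤ l.length :=
  Nat.sInf_le ⟨l, rfl, hl, hprod⟩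

lemma mem_reflSubgroup_of_ellT_pos {a : GLn n} (h : 0 < ellT d n a) : a ∈ reflSubgroup d n := by
  by_contra ha
  have hempty : {k | ∃ l : List (GLn n), l.length = k ∧ (∀ t ∈ l, IsGddRefl d n t) ∧
      l.prod = a} = ∅ :=
    Set.eq_empty_of_forall_notMem fun _ ⟨l, _, hl, hprod⟩ =>
      ha (mem_reflSubgroup_iff.mpr ⟨l, hl, hprod⟩)
  rw [ellT, hempty, Nat.sInf_empty] at h
  exact h.false

lemma ellT_mul_le {a b : GLn n} (ha : a ∈ reflSubgroup d n) (hb : b ∈ reflSubgroup d n) :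
    ellT d n (a * b) ≤ ellT d n a + ellT d n b := by
  obtain ⟨la, hla, rfl, hlena⟩ := exists_reducedTWord ha
  obtain ⟨lb, hlb, rfl, hlenb⟩ := exists_reducedTWord hb
  rw [← hlena, ← hlenb, ← List.length_append, ← List.prod_append]
  exact ellT_le_length (fun t ht => (List.mem_append.mp ht).elim (hla t) (hlb t)) rfl

lemma absLe_trans {u v g : GLn n} (hu : u ∈ reflSubgroup d n) (hv : v ∈ reflSubgroup d n)
    (hg : g ∈ reflSubgroup d n) (huv : absLe d n u v) (hvg : absLe d n v g) :
    absLe d n u g := by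
  have hsplit : ellT d n (u⁻¹ * g) ≤ ellT d n (u⁻¹ * v) + ellT d n (v⁻¹ * g) := by
    simpa only [mul_assoc, mul_inv_cancel_left] using
      ellT_mul_le (mul_mem (inv_mem hu) hv) (mul_mem (inv_mem hv) hg)
  have hfactor : ellT d n g ≤ ellT d n u + ellT d n (u⁻¹ * g) := by
    simpa only [mul_inv_cancel_left] using ellT_mul_le hu (mul_mem (inv_mem hu) hg)
  unfold absLe at *
  omega

lemma absLe.ellT_le {u v : GLn n} (h : absLe d n u v) : ellT d n u ≤ ellT d n v := by
  unfold absLe at h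
  omega

end ReflectionLength

theorem compatible_ordering_restricts_general
    (d n : ℕ) (γ : GLn n) (w : GLn n) (hw : absLe d n w γ)
    (lt : GLn n → GLn n → Prop) (hcompat : IsCompatibleOrdering d n γ lt) :
    IsCompatibleOrdering d n w lt := by
  intro t1 t2 ht1 ht2 ht1w ht2w hcomm x hx hxw ht1x ht2x
  have hxS : x ∈ reflSubgroup d n := mem_reflSubgroup_of_ellT_pos (by omega)
  have hwS : w ∈ reflSubgroup d n :=
    mem_reflSubgroup_of_ellT_pos (by have := hxw.ellT_le; omega)
  have hγS : γ ∈ reflSubgroup d n :=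
    mem_reflSubgroup_of_ellT_pos (by have := hxw.ellT_le; have := hw.ellT_le; omega)
  have hxγ : absLe d n x γ := absLe_trans hxS hwS hγS hxw hw
  have ht1γ : absLe d n t1 γ := absLe_trans ht1.mem_reflSubgroup hwS hγS ht1w hw
  have ht2γ : absLe d n t2 γ := absLe_trans ht2.mem_reflSubgroup hwS hγS ht2w hw
  exact hcompat t1 t2 ht1 ht2 ht1γ ht2γ hcomm x hx hxγ ht1x ht2x

/-- A `γ`-compatible reflection ordering restricts to a `w`-compatible
reflection ordering for every `w ≤_T γ`. -/
theorem compatible_ordering_restricts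
    (d n : ℕ) (hd : 3 ≤ d) (hn : 2 ≤ n)
    (γ : GLn n) (hγ : (γ : Matrix (Fin n) (Fin n) ℂ) = gammaMat d n)
    (w : GLn n) (hw : absLe d n w γ)
    (lt : GLn n → GLn n → Prop)
    (hirr : ∀ t ∈ TgammaSet d n γ, ¬ lt t t)
    (htrans : ∀ a ∈ TgammaSet d n γ, ∀ b ∈ TgammaSet d n γ, ∀ c ∈ TgammaSet d n γ,
      lt a b → lt b c → lt a c)
    (htot : ∀ a ∈ TgammaSet d n γ, ∀ b ∈ TgammaSet d n γ, a ≠ b → lt a b ∨ lt b a)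
    (hcompat : IsCompatibleOrdering d n γ lt) :
    IsCompatibleOrdering d n w lt :=
  compatible_ordering_restricts_general d n γ w hw lt hcompat
end

section
/- Let d ≥ 3 and n ≥ 2 be integers, and let s_i = ((i^0 (i+1)^0)) for 1 ≤ i ≤ n−1 and s_n = (((n−1)^0 n^1)). Then (s_1, s_2, …, s_n) is a reduced T-word for γ, and for every 1 < k ≤ n the left-shift at k, namely (s_1,…,s_{k−2}, s_k, s_k s_{k−1} s_k, s_{k+1},…,s_n), has a descent at k−1 with respect to the total order ≺. -/
open Matrix Complex

/-!
All reflections involved are monomial matrices, so products of them are computed entrywise: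
`s₁ ⋯ s_m` is the permutation matrix of the cycle `(1 2 … m+1)` for `m < n`, and the last
factor `s_n` turns the `n`-cycle into `γ`. A product of `k` reflections fixes a subspace of
codimension at most `k`, and `γ` fixes only `0` because `ζ_d ≠ 1`; hence `ℓ_T(γ) = n` and the
word is reduced. The left-shift at `k` places `s_k s_{k-1} s_k` right after `s_k`. This conjugate
is `((k-1)⁰ (k+1)⁰)` for `k < n` and `((n-1)⁰ n²)` for `k = n`, and in both cases it precedes
`s_k` in `≺`; in the second case because `d ≥ 3` puts `n²` before `n¹` in the block of `n - 1`.
-/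

open scoped List

lemma zetaC_pow_self (d : ℕ) : zetaC d ^ d = 1 := by
  rcases eq_or_ne d 0 with rfl | hd
  · exact pow_zero _
  · exact (Complex.isPrimitiveRoot_exp d hd).pow_eq_one

lemma zetaC_ne_one {d : ℕ} (hd : 2 ≤ d) : zetaC d ≠ 1 :=
  (Complex.isPrimitiveRoot_exp d (by omega)).ne_one (by omega)

section Monomial

variable {ι R : Type*} [DecidableEq ι]

def monoMat [Zero R] (σ : Equiv.Perm ι) (z : ι → R) : Matrix ι ι R :=
  Matrix.of fun k l => if k = σ l then z l else 0

variable [Semiring R]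

lemma monoMat_one_one : monoMat (1 : Equiv.Perm ι) (1 : ι → R) = 1 := by
  ext k l
  simp only [monoMat, Matrix.of_apply, Pi.one_apply, Equiv.Perm.one_apply, Matrix.one_apply]
  congr

variable [Fintype ι]

lemma mul_monoMat (A : Matrix ι ι R) (σ : Equiv.Perm ι) (z : ι → R) :
    A * monoMat σ z = Matrix.of fun k l => A k (σ l) * z l := by
  ext k l
  simp [Matrix.mul_apply, monoMat]

lemma monoMat_mul_monoMat (σ τ : Equiv.Perm ι) (z w : ι → R) :
    monoMat σ z * monoMat τ w = monoMat (σ * τ) fun l => z (τ l) * w l := by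
  rw [mul_monoMat]
  ext k l
  simp only [monoMat, Matrix.of_apply, ite_mul, zero_mul, Equiv.Perm.mul_apply]
  congr

lemma monoMat_mulVec (σ : Equiv.Perm ι) (z x : ι → R) :
    monoMat σ z *ᵥ x = fun k => z (σ.symm k) * x (σ.symm k) := by
  ext k
  simp [Matrix.mulVec, dotProduct, monoMat, ite_mul, ← Equiv.symm_apply_eq]

end Monomial

section SwapMat

variable {ι K : Type*} [DecidableEq ι] [Field K]

-- The reflection `e_a ↦ c • e_b`, `e_b ↦ c⁻¹ • e_a`; `((i⁰ jˢ))` is the case `c = ζ_dˢ`.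
def swapMat (a b : ι) (c : K) : Matrix ι ι K :=
  monoMat (Equiv.swap a b) (Pi.mulSingle a c * Pi.mulSingle b c⁻¹)

lemma swapMat_one (a b : ι) : swapMat a b (1 : K) = monoMat (Equiv.swap a b) 1 := by
  simp [swapMat]

variable [Fintype ι] {a b : ι}

lemma swapMat_mul_self {c : K} (hc : c ≠ 0) :
    swapMat a b c * swapMat a b c = 1 := by
  rw [swapMat, monoMat_mul_monoMat, Equiv.swap_mul_self, ← monoMat_one_one]
  congr 1
  ext l
  simp only [Pi.mul_apply, Pi.mulSingle_apply, Equiv.swap_apply_def, Pi.one_apply]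
  split_ifs <;> simp_all

lemma swapMat_mul_mul_self (hab : a ≠ b) (c e : K) :
    swapMat a b c * swapMat a b e * swapMat a b c = swapMat a b (c ^ 2 * e⁻¹) := by
  rw [swapMat, swapMat, monoMat_mul_monoMat, monoMat_mul_monoMat, Equiv.swap_mul_self,
    one_mul, swapMat]
  congr 1
  ext l
  simp only [Pi.mul_apply, Pi.mulSingle_apply, Equiv.swap_apply_def]
  split_ifs <;> simp_all <;> ring

lemma swapMat_one_conj {e : ι} (hab : a ≠ b) (hae : a ≠ e) :
    swapMat b e (1 : K) * swapMat a b 1 * swapMat b e 1 = swapMat a e 1 := by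
  simp only [swapMat_one, monoMat_mul_monoMat, Pi.one_apply, mul_one,
    Equiv.swap_mul_swap_mul_swap hab hae, Equiv.swap_comm e a]
  rfl

lemma swapMat_mulVec_eq_self_iff (hab : a ≠ b) {c : K} (hc : c ≠ 0) (x : ι → K) :
    swapMat a b c *ᵥ x = x ↔ x b = c * x a := by
  rw [swapMat, monoMat_mulVec, funext_iff]
  constructor
  · intro h
    simpa [hab.symm, eq_comm] using h b
  · intro h k
    simp only [Equiv.symm_swap, Pi.mul_apply, Pi.mulSingle_apply, Equiv.swap_apply_def]
    split_ifs <;> simp_all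

end SwapMat

section Reflections

variable {d n : ℕ}

lemma reflMat_eq_swapMat {i j : ℕ} (s : ℕ) (hi : 1 ≤ i) (hij : i < j) (hjn : j ≤ n) :
    reflMat d n i j s = swapMat (⟨i - 1, by omega⟩ : Fin n) ⟨j - 1, by omega⟩ (zetaC d ^ s) := by
  ext ⟨k, hk⟩ ⟨l, hl⟩
  simp only [reflMat, swapMat, monoMat, Matrix.of_apply, Pi.mul_apply, Pi.mulSingle_apply,
    Equiv.swap_apply_def, Fin.ext_iff]
  split_ifs <;> simp_all <;> omega

lemma mem_fixSpace {w : GLn n} {x : Fin n → ℂ} :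
    x ∈ fixSpace w ↔ (w : Matrix (Fin n) (Fin n) ℂ) *ᵥ x = x := by
  simp [fixSpace, sub_eq_zero]

lemma finrank_fixSpace_of_val_eq_swapMat {t : GLn n} {a b : Fin n} {c : ℂ} (hab : a ≠ b)
    (hc : c ≠ 0) (ht : (t : Matrix (Fin n) (Fin n) ℂ) = swapMat a b c) :
    Module.finrank ℂ (fixSpace t) = n - 1 := by
  let φ : Module.Dual ℂ (Fin n → ℂ) := LinearMap.proj b - c • LinearMap.proj a
  have hker : fixSpace t = LinearMap.ker φ := by
    ext x
    simp [mem_fixSpace, ht, swapMat_mulVec_eq_self_iff hab hc, φ, sub_eq_zero]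
  have hφ : φ ≠ 0 := fun h => by
    simpa [φ, hab] using LinearMap.congr_fun h (Pi.single b 1)
  have hdim := Module.Dual.finrank_ker_add_one_of_ne_zero hφ
  rw [Module.finrank_fin_fun] at hdim
  rw [hker]
  omega

lemma isGddRefl_of_val_eq_swapMat {t : GLn n} {a b : Fin n} {c : ℂ} (hab : a ≠ b)
    (hc : c ≠ 0) (hcd : c ^ d = 1) (ht : (t : Matrix (Fin n) (Fin n) ℂ) = swapMat a b c) :
    IsGddRefl d n t := by
  refine ⟨⟨Equiv.swap a b, Pi.mulSingle a c * Pi.mulSingle b c⁻¹, fun j => ?_, ?_,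
    fun k l => by rw [ht]; rfl⟩, ?_, finrank_fixSpace_of_val_eq_swapMat hab hc ht⟩
  · simp only [Pi.mul_apply, Pi.mulSingle_apply]
    split_ifs <;> simp_all [inv_pow]
  · simp only [Pi.mul_apply, Finset.prod_mul_distrib, Finset.prod_pi_mulSingle']
    simp [hc]
  · refine isOfFinOrder_iff_pow_eq_one.2 ⟨2, two_pos, Units.ext ?_⟩
    rw [Units.val_pow_eq_pow_val, sq, ht, swapMat_mul_self hc, Units.val_one]

lemma isGddRefl_of_val_eq_reflMat {t : GLn n} {i j : ℕ} (s : ℕ) (hi : 1 ≤ i) (hij : i < j)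
    (hjn : j ≤ n) (ht : (t : Matrix (Fin n) (Fin n) ℂ) = reflMat d n i j s) :
    IsGddRefl d n t := by
  refine isGddRefl_of_val_eq_swapMat (c := zetaC d ^ s) (by simp [Fin.ext_iff]; omega)
    (pow_ne_zero _ (Complex.exp_ne_zero _)) ?_ (ht.trans (reflMat_eq_swapMat s hi hij hjn))
  rw [← pow_mul, mul_comm, pow_mul, zetaC_pow_self, one_pow]

end Reflections

section ReflectionLength

variable {d n : ℕ}

lemma fixSpace_one : fixSpace (1 : GLn n) = ⊤ := by
  ext x
  simp [mem_fixSpace]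

lemma finrank_fixSpace_add_finrank_fixSpace_le (u v : GLn n) :
    Module.finrank ℂ (fixSpace u) + Module.finrank ℂ (fixSpace v) ≤
      n + Module.finrank ℂ (fixSpace (u * v)) := by
  have hinf : fixSpace u ⊓ fixSpace v ≤ fixSpace (u * v) := fun x hx => by
    rw [Submodule.mem_inf, mem_fixSpace, mem_fixSpace] at hx
    rw [mem_fixSpace, Units.val_mul, ← Matrix.mulVec_mulVec, hx.2, hx.1]
  have hsup := Submodule.finrank_le (fixSpace u ⊔ fixSpace v)
  rw [Module.finrank_fin_fun] at hsup
  have := Submodule.finrank_sup_add_finrank_inf_eq (fixSpace u) (fixSpace v)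
  have := Submodule.finrank_mono hinf
  omega

lemma le_finrank_fixSpace_prod_add_length {l : List (GLn n)}
    (hl : ∀ t ∈ l, IsGddRefl d n t) :
    n ≤ Module.finrank ℂ (fixSpace l.prod) + l.length := by
  induction l with
  | nil =>
    show n ≤ Module.finrank ℂ (fixSpace (1 : GLn n)) + 0
    rw [fixSpace_one, finrank_top, Module.finrank_fin_fun, add_zero]
  | cons t l ih =>
    have ht := (hl t List.mem_cons_self).2.2
    have := ih fun u hu => hl u (List.mem_cons_of_mem t hu)
    have := finrank_fixSpace_add_finrank_fixSpace_le t l.prod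
    rw [List.prod_cons, List.length_cons]
    omega

lemma isReducedTWord_of_length_add_finrank_fixSpace {w : GLn n} {l : List (GLn n)}
    (hl : ∀ t ∈ l, IsGddRefl d n t) (hprod : l.prod = w)
    (hlen : l.length + Module.finrank ℂ (fixSpace w) = n) : IsReducedTWord d n w l := by
  have hmem : l.length ∈ {k | ∃ l' : List (GLn n), l'.length = k ∧
      (∀ t ∈ l', IsGddRefl d n t) ∧ l'.prod = w} := ⟨l, rfl, hl, hprod⟩
  refine ⟨hl, hprod, le_antisymm (le_csInf ⟨_, hmem⟩ ?_) (Nat.sInf_le hmem)⟩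
  rintro k ⟨l', rfl, hl', rfl⟩
  have := le_finrank_fixSpace_prod_add_length hl'
  omega

end ReflectionLength

lemma mulVec_apply_eq_of_forall_ne {ι R : Type*} [Fintype ι] [NonUnitalNonAssocSemiring R]
    (M : Matrix ι ι R) (x : ι → R) {k l₀ : ι} (h : ∀ l, l ≠ l₀ → M k l = 0) :
    (M *ᵥ x) k = M k l₀ * x l₀ := by
  simp only [Matrix.mulVec, dotProduct]
  exact Finset.sum_eq_single l₀ (fun l _ hl => by rw [h l hl, zero_mul]) (by simp)

section CoxeterElement

variable {d n : ℕ}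

-- The permutation matrix of the cycle `(0 1 … m)` of `Fin n`.
def cycleMat (n m : ℕ) : Matrix (Fin n) (Fin n) ℂ :=
  Matrix.of fun k l : Fin n =>
    if (l : ℕ) < m ∧ (k : ℕ) = (l : ℕ) + 1 then 1
    else if (l : ℕ) = m ∧ (k : ℕ) = 0 then 1
    else if k = l ∧ m < (l : ℕ) then 1
    else 0

-- The matrix of the `(i+1)`-st simple reflection `s_{i+1}` (0-based `i`).
noncomputable def simpleReflMat (d n i : ℕ) : Matrix (Fin n) (Fin n) ℂ :=
  if i + 2 ≤ n then reflMat d n (i + 1) (i + 2) 0 else reflMat d n (n - 1) n 1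

lemma cycleMat_zero : cycleMat n 0 = 1 := by
  ext ⟨k, hk⟩ ⟨l, hl⟩
  simp only [cycleMat, Matrix.of_apply, Matrix.one_apply, Fin.ext_iff]
  split_ifs <;> simp_all

lemma cycleMat_mul_reflMat {m : ℕ} (h : m + 2 ≤ n) :
    cycleMat n m * reflMat d n (m + 1) (m + 2) 0 = cycleMat n (m + 1) := by
  rw [reflMat_eq_swapMat 0 (by omega) (by omega) h, pow_zero, swapMat_one, mul_monoMat]
  ext ⟨k, hk⟩ ⟨l, hl⟩
  simp only [cycleMat, Matrix.of_apply, Equiv.swap_apply_def, Pi.one_apply, mul_one, Fin.ext_iff]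
  split_ifs <;> simp_all <;> omega

lemma cycleMat_mul_reflMat_last (hn : 2 ≤ n) :
    cycleMat n (n - 1) * reflMat d n (n - 1) n 1 = gammaMat d n := by
  rw [reflMat_eq_swapMat 1 (by omega) (by omega) le_rfl, pow_one, swapMat, mul_monoMat]
  ext ⟨k, hk⟩ ⟨l, hl⟩
  simp only [cycleMat, gammaMat, Matrix.of_apply, Equiv.swap_apply_def, Pi.mul_apply,
    Pi.mulSingle_apply, Fin.ext_iff]
  split_ifs <;> (try simp only [true_and] at *) <;> first | omega | simp

lemma prod_map_simpleReflMat_range {m : ℕ} (hm : m < n) :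
    ((List.range m).map (simpleReflMat d n)).prod = cycleMat n m := by
  induction m with
  | zero => simp [cycleMat_zero]
  | succ m ih =>
    rw [List.range_succ, List.map_append, List.prod_append, ih (by omega), List.map_singleton,
      List.prod_singleton, simpleReflMat, if_pos (by omega), cycleMat_mul_reflMat (by omega)]

lemma prod_map_simpleReflMat_range_self (hn : 2 ≤ n) :
    ((List.range n).map (simpleReflMat d n)).prod = gammaMat d n := by
  obtain ⟨m, rfl⟩ : ∃ m, n = m + 1 := ⟨n - 1, by omega⟩
  rw [List.range_succ, List.map_append, List.prod_append, prod_map_simpleReflMat_range (by omega),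
    List.map_singleton, List.prod_singleton, simpleReflMat, if_neg (by omega)]
  exact cycleMat_mul_reflMat_last hn

lemma gammaMat_mulVec_apply_succ (x : Fin n → ℂ) {m : ℕ} (hm : m + 2 < n) :
    (gammaMat d n *ᵥ x) ⟨m + 1, by omega⟩ = x ⟨m, by omega⟩ := by
  rw [mulVec_apply_eq_of_forall_ne _ _ (l₀ := ⟨m, by omega⟩)]
  · simp [gammaMat, hm]
  · intro l hl
    simp only [gammaMat, Matrix.of_apply, ne_eq, Fin.ext_iff] at hl ⊢
    split_ifs <;> first | rfl | omega | simp_all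

lemma gammaMat_mulVec_apply_zero (x : Fin n → ℂ) (hn : 2 ≤ n) :
    (gammaMat d n *ᵥ x) ⟨0, by omega⟩ = zetaC d * x ⟨n - 2, by omega⟩ := by
  rw [mulVec_apply_eq_of_forall_ne _ _ (l₀ := ⟨n - 2, by omega⟩)]
  · simp [gammaMat, show n - 2 + 2 = n by omega]
  · intro l hl
    simp only [gammaMat, Matrix.of_apply, ne_eq, Fin.ext_iff] at hl ⊢
    split_ifs <;> first | rfl | omega | simp_all

lemma gammaMat_mulVec_apply_last (x : Fin n → ℂ) (hn : 1 ≤ n) :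
    (gammaMat d n *ᵥ x) ⟨n - 1, by omega⟩ = (zetaC d)⁻¹ * x ⟨n - 1, by omega⟩ := by
  rw [mulVec_apply_eq_of_forall_ne _ _ (l₀ := ⟨n - 1, by omega⟩)]
  · simp only [gammaMat, Matrix.of_apply]
    split_ifs <;> first | rfl | omega | simp_all
  · intro l hl
    simp only [gammaMat, Matrix.of_apply, ne_eq, Fin.ext_iff] at hl ⊢
    split_ifs <;> first | rfl | omega

lemma fixSpace_eq_bot_of_val_eq_gammaMat (hd : 2 ≤ d) (hn : 2 ≤ n) {γ : GLn n}
    (hγ : (γ : Matrix (Fin n) (Fin n) ℂ) = gammaMat d n) : fixSpace γ = ⊥ := by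
  rw [Submodule.eq_bot_iff]
  intro x hx
  rw [mem_fixSpace, hγ] at hx
  have hconst : ∀ m (hm : m ≤ n - 2), x ⟨m, by omega⟩ = x ⟨0, by omega⟩ := by
    intro m hm
    induction m with
    | zero => rfl
    | succ m ih =>
      have h := gammaMat_mulVec_apply_succ (d := d) x (m := m) (by omega)
      rw [hx] at h
      rw [h, ih (by omega)]
  have hfirst : x ⟨0, by omega⟩ = 0 := by
    have h := gammaMat_mulVec_apply_zero (d := d) x hn
    rw [hx, hconst (n - 2) le_rfl, eq_comm, mul_left_eq_self₀] at h
    exact h.resolve_left (zetaC_ne_one hd)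
  have hlast : x ⟨n - 1, by omega⟩ = 0 := by
    have h := gammaMat_mulVec_apply_last (d := d) x (by omega)
    rw [hx, eq_comm, mul_left_eq_self₀, inv_eq_one] at h
    exact h.resolve_left (zetaC_ne_one hd)
  ext ⟨k, hk⟩
  rcases Nat.lt_or_ge k (n - 1) with hk' | hk'
  · rw [hconst k (by omega), hfirst]
    rfl
  · rw [show (⟨k, hk⟩ : Fin n) = ⟨n - 1, by omega⟩ from Fin.ext (by dsimp only; omega), hlast]
    rfl

end CoxeterElement

section LeftShift

variable {G : Type*} [Monoid G] {l : List G} {i : ℕ}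

lemma hasDescentAt_leftShiftAt_iff (lt : G → G → Prop) (hi : 2 ≤ i) (hil : i ≤ l.length) :
    HasDescentAt lt (leftShiftAt l i) (i - 1) ↔
      lt (l.getD (i - 1) 1 * l.getD (i - 2) 1 * l.getD (i - 1) 1) (l.getD (i - 1) 1) := by
  have hlen : (l.take (i - 2)).length = i - 2 := by simp; omega
  have hfst : (leftShiftAt l i).getD (i - 1 - 1) 1 = l.getD (i - 1) 1 := by
    rw [leftShiftAt, List.append_assoc, List.getD_append_right _ _ _ _ (by omega), hlen,
      show i - 1 - 1 - (i - 2) = 0 by omega]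
    rfl
  have hsnd : (leftShiftAt l i).getD (i - 1) 1 =
      l.getD (i - 1) 1 * l.getD (i - 2) 1 * l.getD (i - 1) 1 := by
    rw [leftShiftAt, List.append_assoc, List.getD_append_right _ _ _ _ (by omega), hlen,
      show i - 1 - (i - 2) = 1 by omega]
    rfl
  rw [HasDescentAt, hfst, hsnd]

end LeftShift

lemma List.getD_ofFn {α : Type*} {n m : ℕ} (f : Fin n → α) (d : α) (hm : m < n) :
    (List.ofFn f).getD m d = f ⟨m, hm⟩ := by
  rw [List.getD_eq_getElem _ _ (by simpa), List.getElem_ofFn]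

lemma listBefore_of_pair_sublist {α : Type*} {l : List α} {a b : α} (h : [a, b] <+ l) :
    ListBefore l a b := by
  obtain ⟨r₁, r₂, rfl, ha, hb⟩ := List.cons_sublist_iff.1 h
  obtain ⟨s₁, t₁, rfl⟩ := List.append_of_mem ha
  obtain ⟨s₂, t₂, rfl⟩ := List.append_of_mem (List.singleton_sublist.1 hb)
  exact ⟨s₁, t₁ ++ s₂, t₂, by simp⟩

lemma pair_sublist_range' {s m a b : ℕ} (hsa : s ≤ a) (hab : a < b) (hb : b < s + m) :
    [a, b] <+ List.range' s m := by
  rw [show m = (b - s) + (m - (b - s)) by omega, ← List.range'_append_1,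
    show s + (b - s) = b by omega]
  exact (List.singleton_sublist.2 (List.mem_range'_1.2 ⟨hsa, by omega⟩)).append
    (List.singleton_sublist.2 (List.mem_range'_1.2 ⟨le_rfl, by omega⟩))

lemma pair_sublist_flatMap {α β : Type*} {L : List α} {x y : α} {a b : β} (f : α → List β)
    (hxy : [x, y] <+ L) (ha : a ∈ f x) (hb : b ∈ f y) : [a, b] <+ L.flatMap f := by
  have := hxy.flatMap f
  simp only [List.flatMap_cons, List.flatMap_nil, List.append_nil] at this
  exact ((List.singleton_sublist.2 ha).append (List.singleton_sublist.2 hb)).trans this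

section SimpleReflections

variable {d n : ℕ}

lemma isGddRefl_of_val_eq_simpleReflMat (hn : 2 ≤ n) {t : GLn n} {i : ℕ}
    (ht : (t : Matrix (Fin n) (Fin n) ℂ) = simpleReflMat d n i) : IsGddRefl d n t := by
  by_cases h : i + 2 ≤ n
  · exact isGddRefl_of_val_eq_reflMat 0 (by omega) (by omega) h (ht.trans (if_pos h))
  · exact isGddRefl_of_val_eq_reflMat 1 (by omega) (by omega) le_rfl (ht.trans (if_neg h))

lemma simpleReflMat_pred_of_lt {k : ℕ} (hk : 1 ≤ k) (hkn : k < n) :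
    simpleReflMat d n (k - 1) = reflMat d n k (k + 1) 0 := by
  rw [simpleReflMat, if_pos (by omega), Nat.sub_add_cancel hk, show k - 1 + 2 = k + 1 by omega]

lemma simpleReflMat_pred_self : simpleReflMat d n (n - 1) = reflMat d n (n - 1) n 1 :=
  if_neg (by omega)

lemma reflMat_conj_adjacent {k : ℕ} (hk : 2 ≤ k) (hkn : k < n) :
    reflMat d n k (k + 1) 0 * reflMat d n (k - 1) k 0 * reflMat d n k (k + 1) 0 =
      reflMat d n (k - 1) (k + 1) 0 := by
  rw [reflMat_eq_swapMat 0 (by omega) (by omega) hkn, reflMat_eq_swapMat 0 (by omega) (by omega)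
    hkn.le, reflMat_eq_swapMat 0 (by omega) (by omega) hkn, pow_zero]
  exact swapMat_one_conj (by simp [Fin.ext_iff]; omega) (by simp [Fin.ext_iff]; omega)

lemma reflMat_conj_last (hn : 2 ≤ n) :
    reflMat d n (n - 1) n 1 * reflMat d n (n - 1) n 0 * reflMat d n (n - 1) n 1 =
      reflMat d n (n - 1) n 2 := by
  simp only [reflMat_eq_swapMat _ (show 1 ≤ n - 1 by omega) (show n - 1 < n by omega) le_rfl]
  rw [swapMat_mul_mul_self (by simp [Fin.ext_iff]; omega)]
  congr 1
  simp [sq]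

lemma pair_sublist_reflTriples_of_lt {k : ℕ} (hk : 2 ≤ k) (hkn : k < n) :
    [(k - 1, k + 1, 0), (k, k + 1, 0)] <+ reflTriples d n := by
  rcases Nat.lt_or_ge (k + 1) n with hkn' | hkn'
  · refine List.Sublist.trans ?_ (List.sublist_append_left _ _)
    exact pair_sublist_flatMap _ (pair_sublist_range' (by omega) (by omega) (by omega))
      (List.mem_map.2 ⟨k + 1, List.mem_range'_1.2 ⟨by omega, by omega⟩, rfl⟩)
      (List.mem_map.2 ⟨k + 1, List.mem_range'_1.2 ⟨by omega, by omega⟩, rfl⟩)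
  · obtain rfl : n = k + 1 := by omega
    refine List.Sublist.trans ?_ (List.sublist_append_right _ _)
    exact pair_sublist_flatMap _ (pair_sublist_range' (by omega) (by omega) (by omega))
      (List.mem_append_left _ List.mem_cons_self) (List.mem_append_left _ List.mem_cons_self)

lemma pair_sublist_reflTriples_last (hd : 3 ≤ d) (hn : 2 ≤ n) :
    [(n - 1, n, 2), (n - 1, n, 1)] <+ reflTriples d n := by
  have hpowers : [(n - 1, n, 2), (n - 1, n, 1)] <+
      (List.range' 1 (d - 1)).map fun r => (n - 1, n, d - r) := by
    have := (pair_sublist_range' (show 1 ≤ d - 2 by omega) (show d - 2 < d - 1 by omega)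
      (show d - 1 < 1 + (d - 1) by omega)).map fun r => (n - 1, n, d - r)
    rwa [List.map_cons, List.map_cons, List.map_nil, show d - (d - 2) = 2 by omega,
      show d - (d - 1) = 1 by omega] at this
  have hblock := (List.singleton_sublist.2
    (List.mem_range'_1.2 ⟨show 1 ≤ n - 1 by omega, show n - 1 < 1 + (n - 1) by omega⟩)).flatMap
    fun i => ((i, n, 0) :: ((List.range' 1 (d - 1)).map fun r => (i, n, d - r))) ++
      ((List.range' (i + 1) (n - 1 - i)).map fun j => (i, j, d - 1))
  rw [List.flatMap_singleton] at hblock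
  exact (hpowers.trans ((List.sublist_cons_self _ _).trans (List.sublist_append_left _ _))).trans
    (hblock.trans (List.sublist_append_right _ _))

lemma precRel_conj_of_val_eq_simpleReflMat (hd : 3 ≤ d) {k : ℕ} (hk : 2 ≤ k) (hkn : k ≤ n)
    {a b : GLn n} (ha : (a : Matrix (Fin n) (Fin n) ℂ) = simpleReflMat d n (k - 1))
    (hb : (b : Matrix (Fin n) (Fin n) ℂ) = simpleReflMat d n (k - 2)) :
    precRel d n (a * b * a) a := by
  rw [show k - 2 = k - 1 - 1 by omega, simpleReflMat_pred_of_lt (by omega) (by omega),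
    Nat.sub_add_cancel (by omega)] at hb
  have hconj : ((a * b * a : GLn n) : Matrix (Fin n) (Fin n) ℂ) =
      simpleReflMat d n (k - 1) * reflMat d n (k - 1) k 0 * simpleReflMat d n (k - 1) := by
    rw [Units.val_mul, Units.val_mul, ha, hb]
  rcases hkn.lt_or_eq with hkn | rfl
  · rw [simpleReflMat_pred_of_lt (by omega) hkn] at ha hconj
    exact ⟨(k - 1, k + 1, 0), (k, k + 1, 0), hconj.trans (reflMat_conj_adjacent hk hkn), ha,
      listBefore_of_pair_sublist (pair_sublist_reflTriples_of_lt hk hkn)⟩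
  · rw [simpleReflMat_pred_self] at ha hconj
    exact ⟨(k - 1, k, 2), (k - 1, k, 1), hconj.trans (reflMat_conj_last hk), ha,
      listBefore_of_pair_sublist (pair_sublist_reflTriples_last hd hk)⟩

end SimpleReflections

/-- The word of simple reflections `(s₁, …, s_n)` (with
`s_i = ((i⁰ (i+1)⁰))` for `i < n` and `s_n = (((n−1)⁰ n¹))`) is a reduced `T`-word for `γ`,
and for every `1 < k ≤ n` its left-shift at `k` has a descent at `k − 1` with respect to
the order `≺`. -/
theorem simple_word_reduced_and_left_shift_has_descent
    (d n : ℕ) (hd : 3 ≤ d) (hn : 2 ≤ n)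
    (γ : GLn n) (hγ : (γ : Matrix (Fin n) (Fin n) ℂ) = gammaMat d n)
    (s : Fin n → GLn n)
    (hs : ∀ i : Fin n, (s i : Matrix (Fin n) (Fin n) ℂ) =
      if (i : ℕ) + 2 ≤ n then reflMat d n ((i : ℕ) + 1) ((i : ℕ) + 2) 0
      else reflMat d n (n - 1) n 1) :
    IsReducedTWord d n γ (List.ofFn s) ∧
    ∀ k : ℕ, 1 < k → k ≤ n →
      HasDescentAt (precRel d n) (leftShiftAt (List.ofFn s) k) (k - 1) := by
  have hs' : ∀ i : Fin n, (s i : Matrix (Fin n) (Fin n) ℂ) = simpleReflMat d n i := hs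
  have hrefl : ∀ t ∈ List.ofFn s, IsGddRefl d n t := by
    intro t ht
    obtain ⟨i, rfl⟩ := List.mem_ofFn.1 ht
    exact isGddRefl_of_val_eq_simpleReflMat hn (hs' i)
  have hprod : (List.ofFn s).prod = γ := by
    refine Units.ext ?_
    rw [← Units.coeHom_apply, map_list_prod, List.map_ofFn, hγ,
      ← prod_map_simpleReflMat_range_self (d := d) hn, ← List.map_coe_finRange_eq_range,
      List.map_map, ← List.ofFn_eq_map]
    exact congrArg _ (congrArg _ (funext hs'))
  refine ⟨isReducedTWord_of_length_add_finrank_fixSpace hrefl hprod ?_, fun k hk hkn => ?_⟩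
  · rw [fixSpace_eq_bot_of_val_eq_gammaMat (by omega) hn hγ, finrank_bot, List.length_ofFn,
      add_zero]
  · rw [hasDescentAt_leftShiftAt_iff _ hk (by simpa), List.getD_ofFn _ _ (by omega),
      List.getD_ofFn _ _ (by omega)]
    exact precRel_conj_of_val_eq_simpleReflMat hd hk hkn (hs' _) (hs' _)
end
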